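/- arXiv:math/0602492 — 8 statements merged into one kernel-verified Lean document; each statement's English description precedes it below -/
import Mathlib

section
/- Let A be an associative unital ℂ-algebra and q, r ∈ ℂ nonzero. Let x, θ, ∂x, ∂θ ∈ A satisfy the Type II quantum superplane relations: x·θ = q·(θ·x), θ·θ = 0, ∂x·x = 1 + r·(x·∂x) + (r−1)·(θ·∂θ), ∂x·θ = (r/q)·(θ·∂x), ∂θ·x = q·(x·∂θ), ∂θ·θ = 1 − θ·∂θ, and ∂θ·∂θ = 0. Define H = x·∂x + θ·∂θ and ∇ = x·∂θ. Then H·x = x + r·(x·H), H·θ = θ + r·(θ·H), ∇·x = q·(x·∇), and ∇·θ = x − q·(θ·∇). -/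
section SuperplaneVectorFields

variable {K A : Type*} [Field K] [Ring A] [Algebra K A] {q r : K} {x θ px pθ : A}

/-- The Euler vector field `H = x ∂x + θ ∂θ` of the quantum superplane. -/
def superEuler (x θ px pθ : A) : A := x * px + θ * pθ

/-- The odd vector field `∇ = x ∂θ` of the quantum superplane. -/
def superGrad (x pθ : A) : A := x * pθ

theorem superEuler_mul_even (hxθ : x * θ = q • (θ * x))
    (hpx_x : px * x = 1 + r • (x * px) + (r - 1) • (θ * pθ))
    (hpθ_x : pθ * x = q • (x * pθ)) :
    superEuler x θ px pθ * x = x + r • (x * superEuler x θ px pθ) := by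
  have hθ_term : θ * (pθ * x) = x * θ * pθ := by
    rw [hpθ_x, mul_smul_comm, ← mul_assoc, ← smul_mul_assoc, hxθ]
  rw [superEuler, add_mul, mul_assoc, mul_assoc, hθ_term, hpx_x]
  simp only [mul_add, mul_one, mul_smul_comm, ← mul_assoc, smul_add]
  module

theorem superEuler_mul_odd (hq : q ≠ 0) (hxθ : x * θ = q • (θ * x)) (hθθ : θ * θ = 0)
    (hpx_θ : px * θ = (r / q) • (θ * px)) (hpθ_θ : pθ * θ = 1 - θ * pθ) :
    superEuler x θ px pθ * θ = θ + r • (θ * superEuler x θ px pθ) := by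
  have hx_term : x * (px * θ) = r • (θ * x * px) := by
    rw [hpx_θ, mul_smul_comm, ← mul_assoc, hxθ, smul_mul_assoc, smul_smul,
      div_mul_cancel₀ r hq]
  have hθ_term : θ * (pθ * θ) = θ := by
    rw [hpθ_θ, mul_sub, mul_one, ← mul_assoc, hθθ, zero_mul, sub_zero]
  rw [superEuler, add_mul, mul_assoc, mul_assoc, hx_term, hθ_term, mul_add, ← mul_assoc θ θ,
    hθθ, zero_mul, add_zero, ← mul_assoc, add_comm]

theorem superGrad_mul_even (hpθ_x : pθ * x = q • (x * pθ)) :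
    superGrad x pθ * x = q • (x * superGrad x pθ) := by
  rw [superGrad, mul_assoc, hpθ_x, mul_smul_comm]

theorem superGrad_mul_odd (hxθ : x * θ = q • (θ * x)) (hpθ_θ : pθ * θ = 1 - θ * pθ) :
    superGrad x pθ * θ = x - q • (θ * superGrad x pθ) := by
  rw [superGrad, mul_assoc, hpθ_θ, mul_sub, mul_one, ← mul_assoc, hxθ, smul_mul_assoc,
    mul_assoc]

end SuperplaneVectorFields

theorem vector_field_coordinate_comm_general {A : Type*} [Ring A] [Algebra ℂ A] (q r : ℂ)
    (hq : q ≠ 0) (x θ px pθ : A)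
    (hxθ : x * θ = q • (θ * x)) (hθθ : θ * θ = 0)
    (hpx_x : px * x = 1 + r • (x * px) + (r - 1) • (θ * pθ))
    (hpx_θ : px * θ = (r / q) • (θ * px))
    (hpθ_x : pθ * x = q • (x * pθ))
    (hpθ_θ : pθ * θ = 1 - θ * pθ) :
    (x * px + θ * pθ) * x = x + r • (x * (x * px + θ * pθ)) ∧
    (x * px + θ * pθ) * θ = θ + r • (θ * (x * px + θ * pθ)) ∧
    (x * pθ) * x = q • (x * (x * pθ)) ∧
    (x * pθ) * θ = x - q • (θ * (x * pθ)) :=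
  ⟨superEuler_mul_even hxθ hpx_x hpθ_x, superEuler_mul_odd hq hxθ hθθ hpx_θ hpθ_θ,
    superGrad_mul_even hpθ_x, superGrad_mul_odd hxθ hpθ_θ⟩

theorem vector_field_coordinate_comm {A : Type*} [Ring A] [Algebra ℂ A] (q r : ℂ)
    (hq : q ≠ 0) (hr : r ≠ 0) (x θ px pθ : A)
    (hxθ : x * θ = q • (θ * x)) (hθθ : θ * θ = 0)
    (hpx_x : px * x = 1 + r • (x * px) + (r - 1) • (θ * pθ))
    (hpx_θ : px * θ = (r / q) • (θ * px))
    (hpθ_x : pθ * x = q • (x * pθ))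
    (hpθ_θ : pθ * θ = 1 - θ * pθ)
    (hpθ_pθ : pθ * pθ = 0) :
    (x * px + θ * pθ) * x = x + r • (x * (x * px + θ * pθ)) ∧
    (x * px + θ * pθ) * θ = θ + r • (θ * (x * px + θ * pθ)) ∧
    (x * pθ) * x = q • (x * (x * pθ)) ∧
    (x * pθ) * θ = x - q • (θ * (x * pθ)) :=
  vector_field_coordinate_comm_general q r hq x θ px pθ hxθ hθθ hpx_x hpx_θ hpθ_x hpθ_θ
end

section
/- Let A be an associative unital ℂ-algebra and Q ∈ ℂ nonzero. Let x ∈ A be invertible and let dx, dθ, θ, H ∈ A satisfy H·dx = dx·H, H·dθ = dθ·H, H·x = x + Q·(x·H), and H·θ = θ + Q·(θ·H). Define ωx = dx·x⁻¹ and ωθ = dθ·x⁻¹ − dx·x⁻¹·θ·x⁻¹. Then H·ωx = −Q⁻¹·ωx + Q⁻¹·(ωx·H) and H·ωθ = −Q⁻¹·ωθ + Q⁻¹·(ωθ·H). -/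
/-!
With `K = Q⁻¹ • (H - 1)`, each relation `H * a = a + Q • (a * H)` reads `a * (1 + Q • H) = H * a`,
i.e. `a` intertwines `1 + Q • H` with `H`; applying the affine map `t ↦ Q⁻¹ • (t - 1)` shows that
`a` also intertwines `H` with `K`. Thus `x⁻¹` intertwines `K` with `H`, `θ` intertwines `H` with `K`,
and `dx`, `dθ` commute with `H`. Hence every monomial of `ωx` and `ωθ` intertwines `K` with `H`,
and `ω * K = H * ω` is the rule `H * ω = -Q⁻¹ • ω + Q⁻¹ • (ω * H)`.
-/

section Intertwining

variable {𝕜 A : Type*} [Field 𝕜] [Ring A] [Algebra 𝕜 A]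

theorem semiconjBy_one_add_smul {a H : A} {Q : 𝕜} (h : H * a = a + Q • (a * H)) :
    SemiconjBy a (1 + Q • H) H := by
  rw [SemiconjBy, mul_add, mul_one, mul_smul_comm, h]

theorem SemiconjBy.inv_smul_sub_one {a H : A} {Q : 𝕜} (hQ : Q ≠ 0)
    (h : SemiconjBy a (1 + Q • H) H) : SemiconjBy a H (Q⁻¹ • (H - 1)) := by
  have := (h.sub_right (SemiconjBy.one_right a)).smul_right Q⁻¹
  rwa [add_sub_cancel_left, smul_smul, inv_mul_cancel₀ hQ, one_smul] at this

theorem SemiconjBy.mul_eq_neg_smul_add_smul {a H : A} {c : 𝕜}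
    (h : SemiconjBy a (c • (H - 1)) H) : H * a = (-c) • a + c • (a * H) := by
  rw [← h, mul_smul_comm, mul_sub, mul_one, smul_sub, neg_smul, neg_add_eq_sub]

end Intertwining

theorem H_cartan_maurer_comm {A : Type*} [Ring A] [Algebra ℂ A] (Q : ℂ) (hQ : Q ≠ 0)
    (x : Aˣ) (dx dθ θ H : A)
    (h1 : H * dx = dx * H) (h2 : H * dθ = dθ * H)
    (h3 : H * (x : A) = (x : A) + Q • ((x : A) * H))
    (h4 : H * θ = θ + Q • (θ * H)) :
    H * (dx * (↑x⁻¹ : A)) = (-Q⁻¹) • (dx * (↑x⁻¹ : A))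
        + Q⁻¹ • ((dx * (↑x⁻¹ : A)) * H) ∧
    H * (dθ * (↑x⁻¹ : A) - dx * (↑x⁻¹ : A) * θ * (↑x⁻¹ : A)) =
      (-Q⁻¹) • (dθ * (↑x⁻¹ : A) - dx * (↑x⁻¹ : A) * θ * (↑x⁻¹ : A))
        + Q⁻¹ • ((dθ * (↑x⁻¹ : A) - dx * (↑x⁻¹ : A) * θ * (↑x⁻¹ : A)) * H) := by
  have hxinv : SemiconjBy (↑x⁻¹ : A) (Q⁻¹ • (H - 1)) H :=
    ((semiconjBy_one_add_smul h3).inv_smul_sub_one hQ).units_inv_symm_left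
  have hθ : SemiconjBy θ H (Q⁻¹ • (H - 1)) := (semiconjBy_one_add_smul h4).inv_smul_sub_one hQ
  have hωx : SemiconjBy (dx * ↑x⁻¹) (Q⁻¹ • (H - 1)) H := SemiconjBy.mul_left h1.symm hxinv
  have hωθ : SemiconjBy (dθ * ↑x⁻¹ - dx * ↑x⁻¹ * θ * ↑x⁻¹) (Q⁻¹ • (H - 1)) H :=
    (SemiconjBy.mul_left h2.symm hxinv).sub_left ((hωx.mul_left hθ).mul_left hxinv)
  exact ⟨hωx.mul_eq_neg_smul_add_smul, hωθ.mul_eq_neg_smul_add_smul⟩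
end

section
/- Let A be an associative unital ℂ-algebra, q ∈ ℂ nonzero, and Q, Q₁₁, Q₁₂, Q₂₁, Q₂₂ ∈ ℂ satisfying Q₁₁ + q·Q₁₂ = q·Q, Q₁₁ + q·Q₂₂ = q, Q₁₂ + q·Q₂₁ = −1, and q·Q₂₁ + Q₂₂ = −Q. Let x ∈ A be invertible and let θ, dx, dθ ∈ A satisfy x·θ = q·(θ·x), θ·θ = 0, x·dx = Q·(dx·x), x·dθ = Q₁₁·(dθ·x) + Q₁₂·(dx·θ), θ·dx = Q₂₁·(dx·θ) + Q₂₂·(dθ·x), and θ·dθ = dθ·θ. Define ωx = dx·x⁻¹ and ωθ = dθ·x⁻¹ − dx·x⁻¹·θ·x⁻¹. Then x·ωx = Q·(ωx·x), x·ωθ = Q₁₁·(ωθ·x), θ·ωx = −Q·(ωx·θ) + Q₂₂·(ωθ·x), and θ·ωθ = Q₁₁·(ωθ·θ). -/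
/-!
Conjugating `x θ = q θ x` by `x⁻¹` gives `θ x⁻¹ = q x⁻¹ θ`, hence `θ x⁻¹ θ = 0`. Moving a
coordinate through `ωx` or `ωθ` with the relations of the calculus then produces a combination of
`dθ` and `ωx θ` (or a multiple of `dθ x⁻¹ θ`), and the covariance conditions on the `Q`'s are
exactly what makes its coefficients match those of `ωθ x = dθ - ωx θ` (resp. `ωθ θ = dθ x⁻¹ θ`).
-/

section

variable {R A : Type*} [CommRing R] [Ring A] [Algebra R A]

def cartanMaurerX (x : Aˣ) (dx : A) : A := dx * ↑x⁻¹

def cartanMaurerθ (x : Aˣ) (θ dx dθ : A) : A := dθ * ↑x⁻¹ - dx * ↑x⁻¹ * θ * ↑x⁻¹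

variable {q : R} {x : Aˣ} {θ dx dθ : A}

theorem Units.mul_inv_eq_smul_inv_mul_of_mul_eq_smul_mul (h : (x : A) * θ = q • (θ * x)) :
    θ * ↑x⁻¹ = q • (↑x⁻¹ * θ) := by
  calc θ * ↑x⁻¹ = ↑x⁻¹ * (x * θ) * ↑x⁻¹ := by simp
    _ = q • (↑x⁻¹ * θ) := by rw [h, mul_smul_comm, smul_mul_assoc]; simp [mul_assoc]

theorem mul_units_inv_mul_self_eq_zero (hxθ : (x : A) * θ = q • (θ * x)) (hθθ : θ * θ = 0) :
    θ * ↑x⁻¹ * θ = 0 := by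
  rw [Units.mul_inv_eq_smul_inv_mul_of_mul_eq_smul_mul hxθ, smul_mul_assoc, mul_assoc, hθθ,
    mul_zero, smul_zero]

theorem cartanMaurerX_mul_self : cartanMaurerX x dx * x = dx := by
  simp [cartanMaurerX, mul_assoc]

theorem cartanMaurerθ_mul_self :
    cartanMaurerθ x θ dx dθ * x = dθ - cartanMaurerX x dx * θ := by
  simp [cartanMaurerθ, cartanMaurerX, sub_mul, mul_assoc]

theorem cartanMaurerθ_mul_θ (hxθ : (x : A) * θ = q • (θ * x)) (hθθ : θ * θ = 0) :
    cartanMaurerθ x θ dx dθ * θ = dθ * ↑x⁻¹ * θ := by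
  rw [cartanMaurerθ, sub_mul,
    show dx * ↑x⁻¹ * θ * ↑x⁻¹ * θ = dx * ↑x⁻¹ * (θ * ↑x⁻¹ * θ) by simp only [mul_assoc],
    mul_units_inv_mul_self_eq_zero hxθ hθθ, mul_zero, sub_zero]

theorem mul_cartanMaurerX {Q : R} (h1 : (x : A) * dx = Q • (dx * x)) :
    x * cartanMaurerX x dx = Q • (cartanMaurerX x dx * x) := by
  rw [cartanMaurerX_mul_self, cartanMaurerX, ← mul_assoc, h1, smul_mul_assoc]
  simp [mul_assoc]

theorem mul_cartanMaurerθ {Q Q11 Q12 : R} (c1 : Q11 + q * Q12 = q * Q)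
    (hxθ : (x : A) * θ = q • (θ * x)) (h1 : (x : A) * dx = Q • (dx * x))
    (h2 : (x : A) * dθ = Q11 • (dθ * x) + Q12 • (dx * θ)) :
    x * cartanMaurerθ x θ dx dθ = Q11 • (cartanMaurerθ x θ dx dθ * x) := by
  have hθy := Units.mul_inv_eq_smul_inv_mul_of_mul_eq_smul_mul hxθ
  calc (x : A) * cartanMaurerθ x θ dx dθ = (x * dθ) * ↑x⁻¹ - (x * dx) * ↑x⁻¹ * θ * ↑x⁻¹ := by
        simp only [cartanMaurerθ, mul_sub, mul_assoc]
    _ = Q11 • dθ + (q * (Q12 - Q)) • (cartanMaurerX x dx * θ) := by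
        rw [h1, h2]
        simp only [cartanMaurerX, add_mul, smul_mul_assoc, mul_assoc, Units.mul_inv, mul_one, hθy,
          mul_smul_comm, smul_smul]
        match_scalars <;> ring
    _ = Q11 • (cartanMaurerθ x θ dx dθ * x) := by
        rw [show q * (Q12 - Q) = -Q11 by linear_combination c1, cartanMaurerθ_mul_self]
        module

theorem θ_mul_cartanMaurerX {Q Q21 Q22 : R} (c4 : q * Q21 + Q22 = -Q)
    (hxθ : (x : A) * θ = q • (θ * x))
    (h3 : θ * dx = Q21 • (dx * θ) + Q22 • (dθ * x)) :
    θ * cartanMaurerX x dx =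
      (-Q) • (cartanMaurerX x dx * θ) + Q22 • (cartanMaurerθ x θ dx dθ * x) := by
  have hθy := Units.mul_inv_eq_smul_inv_mul_of_mul_eq_smul_mul hxθ
  calc θ * cartanMaurerX x dx = (θ * dx) * ↑x⁻¹ := by rw [cartanMaurerX, mul_assoc]
    _ = (q * Q21) • (cartanMaurerX x dx * θ) + Q22 • dθ := by
        rw [h3]
        simp only [cartanMaurerX, add_mul, smul_mul_assoc, mul_assoc, Units.mul_inv, mul_one, hθy,
          mul_smul_comm, smul_smul]
        module
    _ = (-Q) • (cartanMaurerX x dx * θ) + Q22 • (cartanMaurerθ x θ dx dθ * x) := by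
        rw [show q * Q21 = -Q - Q22 by linear_combination c4, cartanMaurerθ_mul_self]
        module

theorem θ_mul_cartanMaurerθ {Q11 Q21 Q22 : R} (c2 : Q11 + q * Q22 = q)
    (hxθ : (x : A) * θ = q • (θ * x)) (hθθ : θ * θ = 0)
    (h3 : θ * dx = Q21 • (dx * θ) + Q22 • (dθ * x)) (h4 : θ * dθ = dθ * θ) :
    θ * cartanMaurerθ x θ dx dθ = Q11 • (cartanMaurerθ x θ dx dθ * θ) := by
  have hθy := Units.mul_inv_eq_smul_inv_mul_of_mul_eq_smul_mul hxθ
  have hθyθ := mul_units_inv_mul_self_eq_zero hxθ hθθ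
  calc θ * cartanMaurerθ x θ dx dθ = (θ * dθ) * ↑x⁻¹ - (θ * dx) * (↑x⁻¹ * θ * ↑x⁻¹) := by
        simp only [cartanMaurerθ, mul_sub, mul_assoc]
    _ = dθ * (θ * ↑x⁻¹) - Q21 • (dx * (θ * ↑x⁻¹ * θ) * ↑x⁻¹) - Q22 • (dθ * (θ * ↑x⁻¹)) := by
        rw [h3, h4]
        simp only [add_mul, smul_mul_assoc, mul_assoc, Units.mul_inv_cancel_left]
        abel
    _ = (q - q * Q22) • (dθ * ↑x⁻¹ * θ) := by
        rw [hθyθ, hθy]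
        simp only [mul_zero, zero_mul, smul_zero, mul_smul_comm, mul_assoc]
        module
    _ = Q11 • (cartanMaurerθ x θ dx dθ * θ) := by
        rw [show q - q * Q22 = Q11 by linear_combination -c2, cartanMaurerθ_mul_θ hxθ hθθ]

end

theorem coordinate_cartan_maurer_comm_general {A : Type*} [Ring A] [Algebra ℂ A]
    (q Q Q11 Q12 Q21 Q22 : ℂ)
    (c1 : Q11 + q * Q12 = q * Q) (c2 : Q11 + q * Q22 = q)
    (c4 : q * Q21 + Q22 = -Q)
    (x : Aˣ) (θ dx dθ : A)
    (hxθ : (x : A) * θ = q • (θ * (x : A))) (hθθ : θ * θ = 0)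
    (h1 : (x : A) * dx = Q • (dx * (x : A)))
    (h2 : (x : A) * dθ = Q11 • (dθ * (x : A)) + Q12 • (dx * θ))
    (h3 : θ * dx = Q21 • (dx * θ) + Q22 • (dθ * (x : A)))
    (h4 : θ * dθ = dθ * θ) :
    (x : A) * (dx * (↑x⁻¹ : A)) = Q • ((dx * (↑x⁻¹ : A)) * (x : A)) ∧
    (x : A) * (dθ * (↑x⁻¹ : A) - dx * (↑x⁻¹ : A) * θ * (↑x⁻¹ : A)) =
      Q11 • ((dθ * (↑x⁻¹ : A) - dx * (↑x⁻¹ : A) * θ * (↑x⁻¹ : A)) * (x : A)) ∧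
    θ * (dx * (↑x⁻¹ : A)) = (-Q) • ((dx * (↑x⁻¹ : A)) * θ)
      + Q22 • ((dθ * (↑x⁻¹ : A) - dx * (↑x⁻¹ : A) * θ * (↑x⁻¹ : A)) * (x : A)) ∧
    θ * (dθ * (↑x⁻¹ : A) - dx * (↑x⁻¹ : A) * θ * (↑x⁻¹ : A)) =
      Q11 • ((dθ * (↑x⁻¹ : A) - dx * (↑x⁻¹ : A) * θ * (↑x⁻¹ : A)) * θ) :=
  ⟨mul_cartanMaurerX h1, mul_cartanMaurerθ c1 hxθ h1 h2, θ_mul_cartanMaurerX c4 hxθ h3,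
    θ_mul_cartanMaurerθ c2 hxθ hθθ h3 h4⟩

theorem coordinate_cartan_maurer_comm {A : Type*} [Ring A] [Algebra ℂ A]
    (q Q Q11 Q12 Q21 Q22 : ℂ) (hq : q ≠ 0)
    (c1 : Q11 + q * Q12 = q * Q) (c2 : Q11 + q * Q22 = q)
    (c3 : Q12 + q * Q21 = -1) (c4 : q * Q21 + Q22 = -Q)
    (x : Aˣ) (θ dx dθ : A)
    (hxθ : (x : A) * θ = q • (θ * (x : A))) (hθθ : θ * θ = 0)
    (h1 : (x : A) * dx = Q • (dx * (x : A)))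
    (h2 : (x : A) * dθ = Q11 • (dθ * (x : A)) + Q12 • (dx * θ))
    (h3 : θ * dx = Q21 • (dx * θ) + Q22 • (dθ * (x : A)))
    (h4 : θ * dθ = dθ * θ) :
    (x : A) * (dx * (↑x⁻¹ : A)) = Q • ((dx * (↑x⁻¹ : A)) * (x : A)) ∧
    (x : A) * (dθ * (↑x⁻¹ : A) - dx * (↑x⁻¹ : A) * θ * (↑x⁻¹ : A)) =
      Q11 • ((dθ * (↑x⁻¹ : A) - dx * (↑x⁻¹ : A) * θ * (↑x⁻¹ : A)) * (x : A)) ∧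
    θ * (dx * (↑x⁻¹ : A)) = (-Q) • ((dx * (↑x⁻¹ : A)) * θ)
      + Q22 • ((dθ * (↑x⁻¹ : A) - dx * (↑x⁻¹ : A) * θ * (↑x⁻¹ : A)) * (x : A)) ∧
    θ * (dθ * (↑x⁻¹ : A) - dx * (↑x⁻¹ : A) * θ * (↑x⁻¹ : A)) =
      Q11 • ((dθ * (↑x⁻¹ : A) - dx * (↑x⁻¹ : A) * θ * (↑x⁻¹ : A)) * θ) :=
  coordinate_cartan_maurer_comm_general q Q Q11 Q12 Q21 Q22 c1 c2 c4 x θ dx dθ hxθ hθθ h1 h2 h3 h4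
end

section
/- Let A be an associative unital ℂ-algebra and q, r ∈ ℂ nonzero. Let x ∈ A be invertible and let θ, dx, dθ ∈ A satisfy the Type II relations: x·θ = q·(θ·x), θ·θ = 0, x·dx = r·(dx·x), x·dθ = q·(dθ·x) + (r−1)·(dx·θ), θ·dx = −(r/q)·(dx·θ), θ·dθ = dθ·θ, dx·dθ = (q/r)·(dθ·dx), and dx·dx = 0. Define ωx = dx·x⁻¹ and ωθ = dθ·x⁻¹ − dx·x⁻¹·θ·x⁻¹. Then ωx·ωθ = ωθ·ωx and ωx·ωx = 0. -/
/-!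
Conjugating the defining relations by `x` turns them into relations that move `y = x⁻¹` to the
left of `θ`, `dx` and `dθ`. Orienting all relations towards the order `y < dθ < dx < θ`
(with `dx * dx = 0`) rewrites every monomial into normal form: `ωx * ωθ` and `ωθ * ωx` both
become `(q² r) • y y dθ dx`, the other terms vanishing since they contain `dx dx` or
`dx θ dx = -(r / q) • dx dx θ`; likewise `ωx * ωx = r • y dx dx y = 0`.
-/

theorem mul_mul_eq_of_mul_eq {M : Type*} [Semigroup M] {a b c : M} (h : a * b = c) (t : M) :
    a * (b * t) = c * t := by
  rw [← mul_assoc, h]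

section

variable {R A : Type*} [CommSemiring R] [Semiring A] [Algebra R A]

theorem Units.mul_inv_eq_of_mul_eq_smul_add (x : Aˣ) {a b : A} {c : R}
    (h : x * a = c • (a * x) + b) : a * ↑x⁻¹ = c • (↑x⁻¹ * a) + ↑x⁻¹ * b * ↑x⁻¹ := by
  calc a * ↑x⁻¹ = ↑x⁻¹ * (x * a) * ↑x⁻¹ := by simp [← mul_assoc]
    _ = c • (↑x⁻¹ * a) + ↑x⁻¹ * b * ↑x⁻¹ := by
      rw [h, mul_add, add_mul, mul_smul_comm, smul_mul_assoc, mul_assoc, mul_assoc a]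
      simp

theorem Units.mul_inv_eq_of_mul_eq_smul (x : Aˣ) {a : A} {c : R} (h : x * a = c • (a * x)) :
    a * ↑x⁻¹ = c • (↑x⁻¹ * a) := by
  simpa using x.mul_inv_eq_of_mul_eq_smul_add (b := 0) (by simpa using h)

end

theorem cartan_maurer_comm_of_relations {K A : Type*} [Field K] [Ring A] [Algebra K A]
    {q r : K} (hr : r ≠ 0) {y θ dx dθ : A}
    (hdx : dx * y = r • (y * dx)) (hθ : θ * y = q • (y * θ))
    (hdθ : dθ * y = q • (y * dθ) + y * ((r - 1) • (dx * θ)) * y)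
    (hθdx : θ * dx = (-(r / q)) • (dx * θ)) (hdxdθ : dx * dθ = (q / r) • (dθ * dx))
    (hdxdx : dx * dx = 0) :
    (dx * y) * (dθ * y - dx * y * θ * y) = (dθ * y - dx * y * θ * y) * (dx * y) ∧
      (dx * y) * (dx * y) = 0 := by
  have hdθ_ordered : dθ * y = q • (y * dθ) + ((r - 1) * q * r) • (y * (y * (dx * θ))) := by
    simp only [hdθ, mul_assoc, hθ, mul_smul_comm, mul_mul_eq_of_mul_eq hdx, smul_mul_assoc,
      smul_smul]
  constructor
  · simp only [mul_sub, sub_mul, mul_add, add_mul, mul_assoc, hdx, hθ, hdθ_ordered, hθdx, hdxdθ,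
      mul_mul_eq_of_mul_eq hdx, mul_mul_eq_of_mul_eq hθ, mul_mul_eq_of_mul_eq hdθ_ordered,
      mul_mul_eq_of_mul_eq hdxdx, smul_mul_assoc, mul_smul_comm, smul_smul, mul_zero,
      zero_mul, smul_zero, add_zero, sub_zero]
    match_scalars
    field_simp
  · nth_rewrite 1 [hdx]
    rw [smul_mul_assoc, mul_assoc, mul_mul_eq_of_mul_eq hdxdx, zero_mul, mul_zero, smul_zero]

theorem cartan_maurer_form_comm_general {A : Type*} [Ring A] [Algebra ℂ A]
    (q r : ℂ) (hr : r ≠ 0)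
    (x : Aˣ) (θ dx dθ : A)
    (hxθ : (x : A) * θ = q • (θ * (x : A)))
    (h1 : (x : A) * dx = r • (dx * (x : A)))
    (h2 : (x : A) * dθ = q • (dθ * (x : A)) + (r - 1) • (dx * θ))
    (h3 : θ * dx = (-(r / q)) • (dx * θ))
    (h5 : dx * dθ = (q / r) • (dθ * dx))
    (h6 : dx * dx = 0) :
    (dx * (↑x⁻¹ : A)) * (dθ * (↑x⁻¹ : A) - dx * (↑x⁻¹ : A) * θ * (↑x⁻¹ : A)) =
      (dθ * (↑x⁻¹ : A) - dx * (↑x⁻¹ : A) * θ * (↑x⁻¹ : A)) * (dx * (↑x⁻¹ : A)) ∧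
    (dx * (↑x⁻¹ : A)) * (dx * (↑x⁻¹ : A)) = 0 :=
  cartan_maurer_comm_of_relations hr (x.mul_inv_eq_of_mul_eq_smul h1)
    (x.mul_inv_eq_of_mul_eq_smul hxθ) (x.mul_inv_eq_of_mul_eq_smul_add h2) h3 h5 h6

theorem cartan_maurer_form_comm {A : Type*} [Ring A] [Algebra ℂ A]
    (q r : ℂ) (hq : q ≠ 0) (hr : r ≠ 0)
    (x : Aˣ) (θ dx dθ : A)
    (hxθ : (x : A) * θ = q • (θ * (x : A))) (hθθ : θ * θ = 0)
    (h1 : (x : A) * dx = r • (dx * (x : A)))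
    (h2 : (x : A) * dθ = q • (dθ * (x : A)) + (r - 1) • (dx * θ))
    (h3 : θ * dx = (-(r / q)) • (dx * θ))
    (h4 : θ * dθ = dθ * θ)
    (h5 : dx * dθ = (q / r) • (dθ * dx))
    (h6 : dx * dx = 0) :
    (dx * (↑x⁻¹ : A)) * (dθ * (↑x⁻¹ : A) - dx * (↑x⁻¹ : A) * θ * (↑x⁻¹ : A)) =
      (dθ * (↑x⁻¹ : A) - dx * (↑x⁻¹ : A) * θ * (↑x⁻¹ : A)) * (dx * (↑x⁻¹ : A)) ∧
    (dx * (↑x⁻¹ : A)) * (dx * (↑x⁻¹ : A)) = 0 :=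
  cartan_maurer_form_comm_general q r hr x θ dx dθ hxθ h1 h2 h3 h5 h6
end

section
/- Let A be an associative unital ℂ-algebra and q, Q, Q₁₁, Q₁₂, Q₂₁, Q₂₂, Q′ ∈ ℂ with q, Q, Q₁₁, Q′ nonzero and Q₁₁ = Q′·(Q + Q₂₂). Let x ∈ A be invertible and let θ, ξ, η, D ∈ A satisfy: D·x = ξ + x·D, D·θ = η − θ·D, D·ξ = −ξ·D, D·η = η·D, x·θ = q·(θ·x), x·ξ = Q·(ξ·x), x·η = Q₁₁·(η·x) + Q₁₂·(ξ·θ), θ·ξ = Q₂₁·(ξ·θ) + Q₂₂·(η·x), ξ·η = Q′·(η·ξ), and ξ·ξ = 0. Define ωθ = η·x⁻¹ − ξ·x⁻¹·θ·x⁻¹. Then D·ωθ − ωθ·D = 0. -/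
/-!
By the graded Leibniz rule, `D ωθ - ωθ D` is a combination of the four monomials
`ξ x⁻¹ η x⁻¹`, `η x⁻¹ ξ x⁻¹`, `ξ x⁻¹ θ x⁻¹ ξ x⁻¹` and `ξ x⁻¹ ξ x⁻¹ θ x⁻¹`, the last of which
vanishes because `ξ x⁻¹ ξ = Q x⁻¹ ξ² = 0`. Commuting the factors `x⁻¹` to the right turns each
of the others into a multiple of `ξ η x⁻²`; after substituting `Q₁₁ = Q' (Q + Q₂₂)` the total
coefficient is a multiple of `(Q₁₁ - q Q) Q₂₂`. This scalar annihilates `ξ η`, as one sees by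
reducing `ξ x θ ξ` in the two possible ways.
-/

section Ring

variable {A : Type*} [Ring A]

theorem Units.mul_inv_eq_of_mul_eq_add_mul {u : Aˣ} {D c : A} (h : D * u = c + u * D) :
    D * ↑u⁻¹ = ↑u⁻¹ * D - ↑u⁻¹ * c * ↑u⁻¹ := by
  linear_combination (norm := noncomm_ring)
    -(↑u⁻¹ * h * ↑u⁻¹) + ↑u⁻¹ * D * u.mul_inv - u.inv_mul * D * ↑u⁻¹

def cartanMaurerTheta (x : Aˣ) (θ ξ η : A) : A :=
  η * ↑x⁻¹ - ξ * ↑x⁻¹ * θ * ↑x⁻¹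

theorem commutator_cartanMaurerTheta (x : Aˣ) {θ ξ η D : A}
    (h1 : D * x = ξ + x * D) (h2 : D * θ = η - θ * D) (h3 : D * ξ = -(ξ * D))
    (h4 : D * η = η * D) :
    D * cartanMaurerTheta x θ ξ η - cartanMaurerTheta x θ ξ η * D =
      ξ * ↑x⁻¹ * η * ↑x⁻¹ - η * ↑x⁻¹ * ξ * ↑x⁻¹ + ξ * ↑x⁻¹ * θ * ↑x⁻¹ * ξ * ↑x⁻¹ -
        ξ * ↑x⁻¹ * ξ * ↑x⁻¹ * θ * ↑x⁻¹ := by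
  have hDx := Units.mul_inv_eq_of_mul_eq_add_mul h1
  linear_combination (norm := (unfold cartanMaurerTheta; noncomm_ring))
    h4 * ↑x⁻¹ + η * hDx - h3 * (↑x⁻¹ * θ * ↑x⁻¹) + ξ * hDx * θ * ↑x⁻¹
      + ξ * ↑x⁻¹ * h2 * ↑x⁻¹ - ξ * ↑x⁻¹ * θ * hDx

end Ring

section Algebra

variable {K A : Type*} [CommRing K] [Ring A] [Algebra K A]

theorem Units.mul_inv_eq_smul_inv_mul {u : Aˣ} {a : A} {c : K} (h : u * a = c • (a * u)) :
    a * ↑u⁻¹ = c • (↑u⁻¹ * a) := by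
  linear_combination (norm := (simp only [mul_smul_comm, smul_mul_assoc, mul_assoc,
      Units.inv_mul_cancel_left, Units.mul_inv, mul_one]; module))
    ↑u⁻¹ * h * ↑u⁻¹

theorem smul_xi_mul_eta_eq_zero (x : Aˣ) {θ ξ η : A} {q Q Q11 Q12 Q21 Q22 : K}
    (h5 : x * θ = q • (θ * x)) (h6 : x * ξ = Q • (ξ * x))
    (h7 : x * η = Q11 • (η * x) + Q12 • (ξ * θ)) (h8 : θ * ξ = Q21 • (ξ * θ) + Q22 • (η * x))
    (h10 : ξ * ξ = 0) :
    ((Q11 - q * Q) * Q22) • (ξ * η) = 0 := by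
  linear_combination (norm := (simp only [mul_add, add_mul, sub_mul, mul_smul_comm,
      smul_mul_assoc, mul_assoc, smul_add, smul_smul, zero_mul, smul_zero,
      Units.mul_inv_cancel_left, Units.mul_inv, mul_one]; module))
    (ξ * h5 * ξ + q • (ξ * θ * h6) + (q * Q) • (ξ * h8 * x) - ξ * x * h8 - Q22 • (ξ * h7 * x)
      - Q21 • (ξ * h6 * θ) - (Q22 * Q12 - q * Q * Q21) • (h10 * θ * x)
      - (Q21 * Q) • (h10 * x * θ)) * (↑x⁻¹ * ↑x⁻¹)

theorem smul_commutator_cartanMaurerTheta (x : Aˣ) {θ ξ η D : A} {q Q Q11 Q12 Q21 Q22 Q' : K}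
    (hcond : Q11 = Q' * (Q + Q22))
    (h1 : D * x = ξ + x * D) (h2 : D * θ = η - θ * D) (h3 : D * ξ = -(ξ * D))
    (h4 : D * η = η * D) (h5 : x * θ = q • (θ * x)) (h6 : x * ξ = Q • (ξ * x))
    (h7 : x * η = Q11 • (η * x) + Q12 • (ξ * θ)) (h8 : θ * ξ = Q21 • (ξ * θ) + Q22 • (η * x))
    (h9 : ξ * η = Q' • (η * ξ)) (h10 : ξ * ξ = 0) :
    (Q11 * q * Q ^ 2) • (D * cartanMaurerTheta x θ ξ η - cartanMaurerTheta x θ ξ η * D) =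
      ((Q11 - q * Q) * Q22) • (ξ * η * ↑x⁻¹ * ↑x⁻¹) := by
  have hξ : ξ * ↑x⁻¹ = Q • (↑x⁻¹ * ξ) := Units.mul_inv_eq_smul_inv_mul h6
  have hθ : θ * ↑x⁻¹ = q • (↑x⁻¹ * θ) := Units.mul_inv_eq_smul_inv_mul h5
  have hξξ : ξ * ↑x⁻¹ * ξ = 0 := by
    linear_combination
      (norm := (simp only [smul_mul_assoc, mul_assoc, mul_zero, smul_zero]; module))
      hξ * ξ + Q • (↑x⁻¹ * h10)
  have hξη : Q11 • (ξ * ↑x⁻¹ * η * ↑x⁻¹) = ξ * η * ↑x⁻¹ * ↑x⁻¹ := by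
    linear_combination (norm := (simp only [mul_add, add_mul, mul_smul_comm, smul_mul_assoc,
      mul_assoc, zero_mul, smul_zero, Units.inv_mul_cancel_left,
      Units.mul_inv_cancel_left]; module))
      -(ξ * ↑x⁻¹ * h7 * (↑x⁻¹ * ↑x⁻¹)) - Q12 • (hξξ * θ * ↑x⁻¹ * ↑x⁻¹)
  have hηξ : (Q * Q11) • (η * ↑x⁻¹ * ξ * ↑x⁻¹) = (Q + Q22) • (ξ * η * ↑x⁻¹ * ↑x⁻¹) := by
    linear_combination
      (norm := (simp only [mul_smul_comm, smul_mul_assoc, mul_assoc, smul_smul]; module))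
      -(Q11 • (η * hξ * ↑x⁻¹) + (Q + Q22) • (h9 * ↑x⁻¹ * ↑x⁻¹)
        - hcond • (η * ξ * ↑x⁻¹ * ↑x⁻¹))
  have hξθξ :
      (q * Q ^ 2) • (ξ * ↑x⁻¹ * θ * ↑x⁻¹ * ξ * ↑x⁻¹) = Q22 • (ξ * η * ↑x⁻¹ * ↑x⁻¹) := by
    linear_combination (norm := (simp only [mul_add, add_mul, mul_smul_comm, smul_mul_assoc,
      mul_assoc, smul_smul, zero_mul, smul_zero, Units.mul_inv_cancel_left]; module))
      -(Q ^ 2 • (ξ * hθ * ↑x⁻¹ * ξ * ↑x⁻¹) + Q • (ξ * θ * ↑x⁻¹ * hξ * ↑x⁻¹)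
        + ξ * θ * hξ * ↑x⁻¹ * ↑x⁻¹ - ξ * h8 * ↑x⁻¹ * ↑x⁻¹ * ↑x⁻¹
        - Q21 • (h10 * θ * ↑x⁻¹ * ↑x⁻¹ * ↑x⁻¹))
  have hξξθ : ξ * ↑x⁻¹ * ξ * ↑x⁻¹ * θ * ↑x⁻¹ = 0 := by
    rw [hξξ, zero_mul, zero_mul, zero_mul]
  rw [commutator_cartanMaurerTheta x h1 h2 h3 h4]
  linear_combination (norm := module)
    (q * Q ^ 2) • hξη - (q * Q) • hηξ + Q11 • hξθξ - (Q11 * q * Q ^ 2) • hξξθ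

end Algebra

theorem d_omega_theta_eq_zero_general {A : Type*} [Ring A] [Algebra ℂ A]
    (q Q Q11 Q12 Q21 Q22 Q' : ℂ)
    (hq : q ≠ 0) (hQ : Q ≠ 0) (hQ11 : Q11 ≠ 0)
    (hcond : Q11 = Q' * (Q + Q22))
    (x : Aˣ) (θ ξ η D : A)
    (h1 : D * (x : A) = ξ + (x : A) * D)
    (h2 : D * θ = η - θ * D)
    (h3 : D * ξ = -(ξ * D))
    (h4 : D * η = η * D)
    (h5 : (x : A) * θ = q • (θ * (x : A)))
    (h6 : (x : A) * ξ = Q • (ξ * (x : A)))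
    (h7 : (x : A) * η = Q11 • (η * (x : A)) + Q12 • (ξ * θ))
    (h8 : θ * ξ = Q21 • (ξ * θ) + Q22 • (η * (x : A)))
    (h9 : ξ * η = Q' • (η * ξ))
    (h10 : ξ * ξ = 0) :
    D * (η * (↑x⁻¹ : A) - ξ * (↑x⁻¹ : A) * θ * (↑x⁻¹ : A)) -
      (η * (↑x⁻¹ : A) - ξ * (↑x⁻¹ : A) * θ * (↑x⁻¹ : A)) * D = 0 := by
  have h := smul_commutator_cartanMaurerTheta x hcond h1 h2 h3 h4 h5 h6 h7 h8 h9 h10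
  rw [← smul_mul_assoc, ← smul_mul_assoc, smul_xi_mul_eta_eq_zero x h5 h6 h7 h8 h10, zero_mul,
    zero_mul] at h
  exact (smul_eq_zero.mp h).resolve_left (mul_ne_zero (mul_ne_zero hQ11 hq) (pow_ne_zero 2 hQ))

theorem d_omega_theta_eq_zero {A : Type*} [Ring A] [Algebra ℂ A]
    (q Q Q11 Q12 Q21 Q22 Q' : ℂ)
    (hq : q ≠ 0) (hQ : Q ≠ 0) (hQ11 : Q11 ≠ 0) (hQ' : Q' ≠ 0)
    (hcond : Q11 = Q' * (Q + Q22))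
    (x : Aˣ) (θ ξ η D : A)
    (h1 : D * (x : A) = ξ + (x : A) * D)
    (h2 : D * θ = η - θ * D)
    (h3 : D * ξ = -(ξ * D))
    (h4 : D * η = η * D)
    (h5 : (x : A) * θ = q • (θ * (x : A)))
    (h6 : (x : A) * ξ = Q • (ξ * (x : A)))
    (h7 : (x : A) * η = Q11 • (η * (x : A)) + Q12 • (ξ * θ))
    (h8 : θ * ξ = Q21 • (ξ * θ) + Q22 • (η * (x : A)))
    (h9 : ξ * η = Q' • (η * ξ))
    (h10 : ξ * ξ = 0) :
    D * (η * (↑x⁻¹ : A) - ξ * (↑x⁻¹ : A) * θ * (↑x⁻¹ : A)) -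
      (η * (↑x⁻¹ : A) - ξ * (↑x⁻¹ : A) * θ * (↑x⁻¹ : A)) * D = 0 :=
  d_omega_theta_eq_zero_general q Q Q11 Q12 Q21 Q22 Q' hq hQ hQ11 hcond x θ ξ η D h1 h2 h3 h4 h5 h6
    h7 h8 h9 h10
end

section
/- Let A be an associative unital ℂ-algebra and Q, Q₁₂ ∈ ℂ with Q nonzero. Let x, θ, ξ, η, iₓ, i_θ, D ∈ A satisfy: D·x = ξ + x·D, D·θ = η − θ·D, iₓ·x = Q·(x·iₓ) + Q₁₂·(θ·i_θ), and iₓ·ξ = 1 − ξ·iₓ − Q⁻¹·Q₁₂·(η·i_θ). Define Lₓ = iₓ·D + D·iₓ and L_θ = i_θ·D − D·i_θ. Then Lₓ·x = 1 + Q·(x·Lₓ) + Q₁₂·(θ·L_θ) + (Q−1)·(ξ·iₓ + Q⁻¹·Q₁₂·(η·i_θ)). -/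
section CartanCalculus

variable {A : Type*} [Ring A] [Algebra ℂ A] {Q Q12 : ℂ} {x θ ξ η ix iθ D : A}

theorem inner_mul_exterior_mul_x (h1 : D * x = ξ + x * D)
    (h3 : ix * x = Q • (x * ix) + Q12 • (θ * iθ))
    (h4 : ix * ξ = 1 - ξ * ix - (Q⁻¹ * Q12) • (η * iθ)) :
    ix * (D * x) = 1 - ξ * ix - (Q⁻¹ * Q12) • (η * iθ)
      + Q • (x * (ix * D)) + Q12 • (θ * (iθ * D)) := by
  rw [h1, mul_add, ← mul_assoc, h4, ← mul_assoc, h3]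
  simp only [add_mul, smul_mul_assoc, mul_assoc]
  abel

theorem exterior_mul_inner_mul_x (h1 : D * x = ξ + x * D) (h2 : D * θ = η - θ * D)
    (h3 : ix * x = Q • (x * ix) + Q12 • (θ * iθ)) :
    D * (ix * x) = Q • (ξ * ix) + Q • (x * (D * ix)) + Q12 • (η * iθ)
      - Q12 • (θ * (D * iθ)) := by
  rw [h3, mul_add, mul_smul_comm, mul_smul_comm, ← mul_assoc, ← mul_assoc, h1, h2]
  simp only [add_mul, sub_mul, smul_add, smul_sub, mul_assoc]
  abel

end CartanCalculus

theorem lie_deriv_x_coordinate_comm {A : Type*} [Ring A] [Algebra ℂ A]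
    (Q Q12 : ℂ) (hQ : Q ≠ 0)
    (x θ ξ η ix iθ D : A)
    (h1 : D * x = ξ + x * D)
    (h2 : D * θ = η - θ * D)
    (h3 : ix * x = Q • (x * ix) + Q12 • (θ * iθ))
    (h4 : ix * ξ = 1 - ξ * ix - (Q⁻¹ * Q12) • (η * iθ)) :
    (ix * D + D * ix) * x =
      1 + Q • (x * (ix * D + D * ix)) + Q12 • (θ * (iθ * D - D * iθ))
        + (Q - 1) • (ξ * ix + (Q⁻¹ * Q12) • (η * iθ)) := by
  have hcoeff : (Q - 1) * (Q⁻¹ * Q12) = Q12 - Q⁻¹ * Q12 := by field_simp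
  calc (ix * D + D * ix) * x = ix * (D * x) + D * (ix * x) := by noncomm_ring
    _ = 1 - ξ * ix - (Q⁻¹ * Q12) • (η * iθ) + Q • (x * (ix * D)) + Q12 • (θ * (iθ * D))
          + (Q • (ξ * ix) + Q • (x * (D * ix)) + Q12 • (η * iθ) - Q12 • (θ * (D * iθ))) := by
        rw [inner_mul_exterior_mul_x h1 h3 h4, exterior_mul_inner_mul_x h1 h2 h3]
    _ = _ := by
        rw [smul_add, smul_smul, hcoeff, mul_add, mul_sub, smul_add, smul_sub, sub_smul]
        module
end

section
/- Let A be an associative unital ℂ-algebra and Q, Q₁₁ ∈ ℂ with Q nonzero. Let x, ξ, i_θ, D ∈ A satisfy: D·x = ξ + x·D, i_θ·x = Q₁₁·(x·i_θ), and i_θ·ξ = Q⁻¹·Q₁₁·(ξ·i_θ). Define L_θ = i_θ·D − D·i_θ. Then L_θ·x = Q₁₁·(x·L_θ) + Q₁₁·(Q⁻¹ − 1)·(ξ·i_θ). -/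
theorem commutator_mul_of_leibniz_of_mul_eq_smul {R A : Type*} [CommRing R] [Ring A]
    [Algebra R A] {c : R} {a D x ξ : A} (hD : D * x = ξ + x * D) (ha : a * x = c • (x * a)) :
    (a * D - D * a) * x = c • (x * (a * D - D * a)) + (a * ξ - c • (ξ * a)) := by
  calc (a * D - D * a) * x = a * (D * x) - D * (a * x) := by noncomm_ring
    _ = a * (ξ + x * D) - D * (c • (x * a)) := by rw [hD, ha]
    _ = a * ξ + (a * x) * D - c • ((D * x) * a) := by
        simp only [mul_add, mul_smul_comm, mul_assoc]
    _ = c • (x * (a * D - D * a)) + (a * ξ - c • (ξ * a)) := by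
        rw [ha, hD, smul_mul_assoc, add_mul]
        simp only [mul_sub, mul_assoc, smul_sub, smul_add]
        abel

theorem lie_deriv_theta_coordinate_comm_general {A : Type*} [Ring A] [Algebra ℂ A]
    (Q Q11 : ℂ)
    (x ξ iθ D : A)
    (h1 : D * x = ξ + x * D)
    (h2 : iθ * x = Q11 • (x * iθ))
    (h3 : iθ * ξ = (Q⁻¹ * Q11) • (ξ * iθ)) :
    (iθ * D - D * iθ) * x =
      Q11 • (x * (iθ * D - D * iθ)) + (Q11 * (Q⁻¹ - 1)) • (ξ * iθ) := by
  rw [commutator_mul_of_leibniz_of_mul_eq_smul h1 h2, h3]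
  module

theorem lie_deriv_theta_coordinate_comm {A : Type*} [Ring A] [Algebra ℂ A]
    (Q Q11 : ℂ) (hQ : Q ≠ 0)
    (x ξ iθ D : A)
    (h1 : D * x = ξ + x * D)
    (h2 : iθ * x = Q11 • (x * iθ))
    (h3 : iθ * ξ = (Q⁻¹ * Q11) • (ξ * iθ)) :
    (iθ * D - D * iθ) * x =
      Q11 • (x * (iθ * D - D * iθ)) + (Q11 * (Q⁻¹ - 1)) • (ξ * iθ) :=
  lie_deriv_theta_coordinate_comm_general Q Q11 x ξ iθ D h1 h2 h3
end

section
/- Let A be an associative unital ℂ-algebra and Q, Q₁₂, Q₂₁ ∈ ℂ with Q nonzero. Let ξ, η, θ, iₓ, i_θ, D ∈ A satisfy: D·ξ = −ξ·D, D·η = η·D, iₓ·ξ = 1 − ξ·iₓ − Q⁻¹·Q₁₂·(η·i_θ), iₓ·η = −Q⁻¹·Q₂₁·(η·iₓ), and iₓ·θ = Q₂₁·(θ·iₓ). Define Lₓ = iₓ·D + D·iₓ and L_θ = i_θ·D − D·i_θ. Then Lₓ·ξ = ξ·Lₓ + Q⁻¹·Q₁₂·(η·L_θ) and Lₓ·η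 = −Q⁻¹·Q₂₁·(η·Lₓ). -/
/-! Because `D` anticommutes with `ξ`, `Lₓ ξ - ξ Lₓ` is the commutator of `D` with
`iₓ ξ + ξ iₓ = 1 - Q⁻¹ Q₁₂ η i_θ`; as `D` commutes with `η`, that commutator is
`Q⁻¹ Q₁₂ η L_θ`. The relation for `η` is the same computation with a scalar twist. -/

section CartanCommutation

variable {A : Type*} [Ring A]

theorem anticomm_mul_sub_mul_anticomm_of_mul_eq_neg {D ξ : A} (h : D * ξ = -(ξ * D)) (i : A) :
    (i * D + D * i) * ξ - ξ * (i * D + D * i) = D * (i * ξ + ξ * i) - (i * ξ + ξ * i) * D := by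
  have hiD : i * D * ξ = -(i * ξ * D) := by rw [mul_assoc, h, mul_neg, ← mul_assoc]
  have hDi : ξ * D * i = -(D * ξ * i) := by rw [h, neg_mul, neg_neg]
  simp only [add_mul, mul_add, ← mul_assoc, hiD, hDi]
  abel

variable {R : Type*} [CommSemiring R] [Algebra R A]

theorem anticomm_mul_eq_smul_of_commute {D η i : A} {k : R} (h : D * η = η * D)
    (hi : i * η = k • (η * i)) : (i * D + D * i) * η = k • (η * (i * D + D * i)) := by
  rw [add_mul, mul_assoc, mul_assoc, h, ← mul_assoc, hi, mul_smul_comm, ← mul_assoc D, h,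
    smul_mul_assoc, mul_assoc, mul_assoc, mul_add, smul_add]

end CartanCommutation

theorem lie_deriv_x_differential_comm_general {A : Type*} [Ring A] [Algebra ℂ A]
    (Q Q12 Q21 : ℂ)
    (ξ η ix iθ D : A)
    (h1 : D * ξ = -(ξ * D))
    (h2 : D * η = η * D)
    (h3 : ix * ξ = 1 - ξ * ix - (Q⁻¹ * Q12) • (η * iθ))
    (h4 : ix * η = (-(Q⁻¹ * Q21)) • (η * ix)) :
    (ix * D + D * ix) * ξ =
      ξ * (ix * D + D * ix) + (Q⁻¹ * Q12) • (η * (iθ * D - D * iθ)) ∧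
    (ix * D + D * ix) * η = (-(Q⁻¹ * Q21)) • (η * (ix * D + D * ix)) := by
  refine ⟨?_, anticomm_mul_eq_smul_of_commute h2 h4⟩
  have hanti : ix * ξ + ξ * ix = 1 - (Q⁻¹ * Q12) • (η * iθ) := by rw [h3]; abel
  rw [← sub_eq_iff_eq_add', anticomm_mul_sub_mul_anticomm_of_mul_eq_neg h1, hanti, mul_sub,
    sub_mul, mul_one, one_mul, mul_smul_comm, smul_mul_assoc, ← mul_assoc D, h2, mul_assoc,
    mul_assoc, mul_sub]
  module

theorem lie_deriv_x_differential_comm {A : Type*} [Ring A] [Algebra ℂ A]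
    (Q Q12 Q21 : ℂ) (hQ : Q ≠ 0)
    (ξ η θ ix iθ D : A)
    (h1 : D * ξ = -(ξ * D))
    (h2 : D * η = η * D)
    (h3 : ix * ξ = 1 - ξ * ix - (Q⁻¹ * Q12) • (η * iθ))
    (h4 : ix * η = (-(Q⁻¹ * Q21)) • (η * ix))
    (h5 : ix * θ = Q21 • (θ * ix)) :
    (ix * D + D * ix) * ξ =
      ξ * (ix * D + D * ix) + (Q⁻¹ * Q12) • (η * (iθ * D - D * iθ)) ∧
    (ix * D + D * ix) * η = (-(Q⁻¹ * Q21)) • (η * (ix * D + D * ix)) :=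
  lie_deriv_x_differential_comm_general Q Q12 Q21 ξ η ix iθ D h1 h2 h3 h4
end
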